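/- arXiv:1005.4373 — 3 statements merged into one kernel-verified Lean document; each statement's English description precedes it below -/
import Mathlib

section
/- Let D be a finite subset of the sphere S_r = {x ∈ ℝ^d : ‖x‖ = r} with D = −D which is a spherical 4-design. Then for every symmetric d×d real matrix H, ∑_{x ∈ D} (xᵀ H x)² = (r⁴|D|/(d(d+2)))·((Tr H)² + 2 Tr(H²)). -/
open Matrix MeasureTheory Metric
open scoped BigOperators

noncomputable section

/-- The rotation-invariant surface measure on the sphere of radius `r` centered at the
origin in `ℝ^d`, obtained by rescaling the surface measure on the unit sphere induced by
Lebesgue measure. -/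
def sphereMeasure (d : ℕ) (r : ℝ) : Measure (EuclideanSpace ℝ (Fin d)) :=
  Measure.map (fun x : EuclideanSpace ℝ (Fin d) => r • x)
    (Measure.map Subtype.val (volume : Measure (EuclideanSpace ℝ (Fin d))).toSphere)

/-- `D` is a spherical `n`-design on the sphere of radius `r` in `ℝ^d`: for every
polynomial `p` of total degree at most `n`, the average of `p` over the sphere (with
respect to the rotation-invariant surface measure) equals the average of `p` over `D`. -/
def IsSphericalDesign {d : ℕ} (r : ℝ) (n : ℕ) (D : Finset (EuclideanSpace ℝ (Fin d))) :
    Prop :=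
  ∀ p : MvPolynomial (Fin d) ℝ, p.totalDegree ≤ n →
    ⨍ x, MvPolynomial.eval (x : Fin d → ℝ) p ∂(sphereMeasure d r)
      = (∑ x ∈ D, MvPolynomial.eval (x : Fin d → ℝ) p) / (D.card : ℝ)

/-!
Applying the design property to the degree-4 polynomial `(xᵀHx)²` reduces the identity to the
sphere average of `(yᵀHy)²`. Integrating a homogeneous quartic against `exp (-π‖x‖²)` in polar
coordinates gives its sphere integral times a radial constant; on the other hand the Gaussian
integral factorises over the coordinates, and Isserlis' theorem gives the fourth moments
`∫ xᵢxⱼxₖxₗ exp (-π‖x‖²) = (δᵢⱼδₖₗ + δᵢₖδⱼₗ + δᵢₗδⱼₖ) / (2π)²`. Contracting with `H ⊗ H` gives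
`(Tr H)² + 2 Tr(H²)`, and comparing with `H = 1`, for which `(yᵀy)² = 1` on the sphere,
eliminates the radial constant.
-/

open Real Set

def gaussMoment (n : ℕ) : ℝ := ∫ x : ℝ, x ^ n * exp (-π * x ^ 2)

lemma integrable_pow_mul_exp_neg_pi_mul_sq (n : ℕ) :
    Integrable fun x : ℝ => x ^ n * exp (-π * x ^ 2) := by
  simpa using integrable_rpow_mul_exp_neg_mul_sq pi_pos
    (lt_of_lt_of_le neg_one_lt_zero (Nat.cast_nonneg n))

lemma gaussMoment_zero : gaussMoment 0 = 1 := by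
  simp only [gaussMoment, pow_zero, one_mul, integral_gaussian, div_self pi_ne_zero, sqrt_one]

lemma gaussMoment_one : gaussMoment 1 = 0 := by
  have h := integral_neg_eq_self (fun x : ℝ => x * exp (-π * x ^ 2)) volume
  simp only [neg_sq, neg_mul, integral_neg] at h
  simp only [gaussMoment, pow_one, neg_mul]
  linarith

lemma gaussMoment_add_two (n : ℕ) :
    gaussMoment (n + 2) = (n + 1) / (2 * π) * gaussMoment n := by
  have hu (x : ℝ) : HasDerivAt (fun x : ℝ => x ^ (n + 1)) ((n + 1) * x ^ n) x := by
    simpa using hasDerivAt_pow (n + 1) x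
  have hv (x : ℝ) : HasDerivAt (fun x : ℝ => exp (-π * x ^ 2))
      (-2 * π * x * exp (-π * x ^ 2)) x := by
    convert ((hasDerivAt_pow 2 x).const_mul (-π)).exp using 1
    push_cast; ring
  have ibp := integral_mul_deriv_eq_deriv_mul_of_integrable (fun x _ => hu x) (fun x _ => hv x)
    (by simpa [Pi.mul_def, mul_comm, mul_left_comm, mul_assoc, pow_succ] using
      (integrable_pow_mul_exp_neg_pi_mul_sq (n + 2)).const_mul (-2 * π))
    (by simpa [Pi.mul_def, mul_assoc] using
      (integrable_pow_mul_exp_neg_pi_mul_sq n).const_mul ((n : ℝ) + 1))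
    (integrable_pow_mul_exp_neg_pi_mul_sq (n + 1))
  have lhs : ∫ x : ℝ, x ^ (n + 1) * (-2 * π * x * exp (-π * x ^ 2))
      = -2 * π * gaussMoment (n + 2) := by
    rw [gaussMoment, ← integral_const_mul]; congr 1; ext x; ring
  have rhs : ∫ x : ℝ, (n + 1) * x ^ n * exp (-π * x ^ 2) = (n + 1) * gaussMoment n := by
    rw [gaussMoment, ← integral_const_mul]; congr 1; ext x; ring
  rw [lhs, rhs] at ibp
  field_simp
  linarith

lemma gaussMoment_two : gaussMoment 2 = 1 / (2 * π) := by
  simpa [gaussMoment_zero] using gaussMoment_add_two 0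

-- For `n = 0` the truncated `n - 1` is harmless: both sides vanish.
lemma gaussMoment_succ (n : ℕ) :
    gaussMoment (n + 1) = n * gaussMoment 2 * gaussMoment (n - 1) := by
  rcases n with _ | n
  · simp [gaussMoment_one]
  · rw [gaussMoment_add_two, gaussMoment_two]
    push_cast
    ring_nf

lemma integral_prod_pow_mul_gaussian {ι : Type*} [Fintype ι] (m : ι → ℕ) :
    ∫ x : EuclideanSpace ℝ ι, (∏ i, x i ^ m i) * exp (-π * ‖x‖ ^ 2)
      = ∏ i, gaussMoment (m i) := by
  have h (x : EuclideanSpace ℝ ι) : (∏ i, x i ^ m i) * exp (-π * ‖x‖ ^ 2)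
      = ∏ i, (x.ofLp i ^ m i * exp (-π * x.ofLp i ^ 2)) := by
    simp only [EuclideanSpace.norm_sq_eq, Real.norm_eq_abs, sq_abs, Finset.mul_sum, exp_sum,
      Finset.prod_mul_distrib]
  simp_rw [h]
  refine ((EuclideanSpace.volume_preserving_symm_measurableEquiv_toLp ι).integral_comp'
    (fun y : ι → ℝ => ∏ i, (y i ^ m i * exp (-π * y i ^ 2)))).trans ?_
  rw [volume_pi]
  exact integral_fintype_prod_eq_prod (fun i (t : ℝ) => t ^ m i * exp (-π * t ^ 2))

section Isserlis

variable {ι : Type*} [Fintype ι] [DecidableEq ι]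

def isserlisTensor (i j k l : ι) : ℝ :=
  (if i = j then 1 else 0) * (if k = l then 1 else 0)
    + (if i = k then 1 else 0) * (if j = l then 1 else 0)
    + (if i = l then 1 else 0) * (if j = k then 1 else 0)

lemma prod_gaussMoment_add_single (m : ι → ℕ) (i : ι) :
    ∏ t, gaussMoment ((m + Pi.single i 1 : ι → ℕ) t)
      = m i * gaussMoment 2 * ∏ t, gaussMoment ((m - Pi.single i 1 : ι → ℕ) t) := by
  rw [← Finset.mul_prod_erase _ _ (Finset.mem_univ i),
    ← Finset.mul_prod_erase _ _ (Finset.mem_univ i), ← mul_assoc]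
  congr 1
  · rw [Pi.add_apply, Pi.sub_apply, Pi.single_eq_same, gaussMoment_succ]
  · refine Finset.prod_congr rfl fun t ht => ?_
    simp [Finset.ne_of_mem_erase ht]

lemma prod_gaussMoment_single_add_single (k l : ι) :
    ∏ t, gaussMoment ((Pi.single k 1 + Pi.single l 1 : ι → ℕ) t)
      = if k = l then gaussMoment 2 else 0 := by
  rw [prod_gaussMoment_add_single]
  split_ifs with hkl
  · subst hkl
    simp [gaussMoment_zero]
  · simp [Pi.single_apply, Ne.symm hkl]

lemma prod_gaussMoment_isserlis (i j k l : ι) :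
    ∏ t, gaussMoment
        ((Pi.single i 1 + Pi.single j 1 + Pi.single k 1 + Pi.single l 1 : ι → ℕ) t)
      = gaussMoment 2 ^ 2 * isserlisTensor i j k l := by
  set e : ι → ι → ℕ := fun a => Pi.single a 1
  have hδ (a b : ι) : (e a b : ℝ) = if b = a then 1 else 0 := by
    simp [e, Pi.single_apply]
  rw [show e i + e j + e k + e l = e j + e k + e l + e i by abel, prod_gaussMoment_add_single]
  simp only [Pi.add_apply, Nat.cast_add, hδ, add_mul]
  have remove (a : ι) (rest : ι → ℕ) (hrest : e j + e k + e l = e a + rest) :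
      (if i = a then (1 : ℝ) else 0) * gaussMoment 2
          * ∏ t, gaussMoment ((e j + e k + e l - Pi.single i 1 : ι → ℕ) t)
        = (if i = a then 1 else 0) * gaussMoment 2 * ∏ t, gaussMoment (rest t) := by
    split_ifs with h
    · subst h; rw [hrest, add_tsub_cancel_left]
    · simp
  rw [remove j (e k + e l) (by abel), remove k (e j + e l) (by abel),
    remove l (e j + e k) (by abel)]
  simp only [e, prod_gaussMoment_single_add_single, isserlisTensor]
  split_ifs <;> ring

lemma sum_mul_isserlisTensor {H : Matrix ι ι ℝ} (hH : H.IsSymm) :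
    ∑ i, ∑ j, ∑ k, ∑ l, H i j * H k l * isserlisTensor i j k l
      = H.trace ^ 2 + 2 * (H * H).trace := by
  simp only [isserlisTensor, mul_add, Finset.sum_add_distrib, mul_ite, mul_one, mul_zero,
    Finset.sum_ite_eq, Finset.mem_univ, if_true, Finset.sum_ite_irrel, Finset.sum_const_zero]
  simp only [Matrix.trace, Matrix.diag, Matrix.mul_apply, sq, Finset.sum_mul_sum, hH.apply]
  ring

lemma prod_pow_add_singles (x : ι → ℝ) (i j k l : ι) :
    ∏ t, x t ^ ((Pi.single i 1 + Pi.single j 1 + Pi.single k 1 + Pi.single l 1 : ι → ℕ) t)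
      = x i * x j * x k * x l := by
  have hsingle (a : ι) : ∏ t, x t ^ (Pi.single a 1 : ι → ℕ) t = x a := by
    simp [Pi.single_apply, pow_ite]
  simp only [Pi.add_apply, pow_add, Finset.prod_mul_distrib, hsingle]

end Isserlis

theorem integral_mul_radial_eq_integral_toSphere_mul {E : Type*} [NormedAddCommGroup E]
    [NormedSpace ℝ E] [FiniteDimensional ℝ E] [MeasurableSpace E] [BorelSpace E] [Nontrivial E]
    (μ : Measure E) [μ.IsAddHaarMeasure] {n : ℕ} (q : E → ℝ)
    (hq : ∀ c : ℝ, 0 < c → ∀ x, q (c • x) = c ^ n * q x) (g : ℝ → ℝ) :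
    ∫ x, q x * g ‖x‖ ∂μ
      = (∫ y, q y ∂μ.toSphere)
        * ∫ s : Ioi (0 : ℝ), (s : ℝ) ^ n * g s
            ∂(Measure.volumeIoiPow (Module.finrank ℝ E - 1)) := by
  rw [← integral_prod_mul (fun y : sphere (0 : E) 1 => q y),
    ← μ.measurePreserving_homeomorphUnitSphereProd.integral_comp
      (Homeomorph.measurableEmbedding _)]
  conv_lhs => rw [← restrict_compl_singleton (μ := μ) 0,
    ← integral_subtype_comap (measurableSet_singleton _).compl]
  refine integral_congr_ae (.of_forall fun x => ?_)
  have hx : (x : E) ≠ 0 := x.2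
  simp only [homeomorphUnitSphereProd_apply_fst_coe, homeomorphUnitSphereProd_apply_snd_coe]
  have hqx := hq _ (norm_pos_iff.2 hx) (‖(x : E)‖⁻¹ • (x : E))
  rw [smul_inv_smul₀ (norm_ne_zero_iff.2 hx)] at hqx
  rw [hqx]
  ring

lemma sq_dotProduct_mulVec_self {ι R : Type*} [Fintype ι] [CommSemiring R] (H : Matrix ι ι R)
    (x : ι → R) :
    (x ⬝ᵥ H *ᵥ x) ^ 2 = ∑ i, ∑ j, ∑ k, ∑ l, H i j * H k l * (x i * x j * x k * x l) := by
  have h : x ⬝ᵥ H *ᵥ x = ∑ i, ∑ j, H i j * (x i * x j) := by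
    simp only [dotProduct, mulVec, Finset.mul_sum]
    exact Finset.sum_congr rfl fun i _ => Finset.sum_congr rfl fun j _ => by ring
  rw [sq, h, Finset.sum_mul_sum]
  refine Finset.sum_congr rfl fun i _ => ?_
  simp_rw [Finset.sum_mul_sum]
  rw [Finset.sum_comm]
  refine Finset.sum_congr rfl fun j _ => Finset.sum_congr rfl fun k _ =>
    Finset.sum_congr rfl fun l _ => by ring

section UnitSphere

variable {ι : Type*} [Fintype ι]

local notation "E" => EuclideanSpace ℝ ι
local notation "σ" => Measure.toSphere (volume : Measure E)

lemma dotProduct_self_of_mem_unitSphere (y : sphere (0 : E) 1) :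
    ((y : E) : ι → ℝ) ⬝ᵥ ((y : E) : ι → ℝ) = 1 := by
  have h := EuclideanSpace.norm_sq_eq (y : E)
  simp only [norm_eq_of_mem_sphere y, one_pow, Real.norm_eq_abs, sq_abs] at h
  simp [dotProduct, h, sq]

variable [DecidableEq ι]

lemma integral_toSphere_monomial_mul [Nonempty ι] (i j k l : ι) :
    (∫ y, (y : E) i * (y : E) j * (y : E) k * (y : E) l ∂σ)
      * ∫ s : Ioi (0 : ℝ), (s : ℝ) ^ 4 * exp (-π * s ^ 2)
          ∂(Measure.volumeIoiPow (Module.finrank ℝ E - 1))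
      = gaussMoment 2 ^ 2 * isserlisTensor i j k l := by
  rw [← integral_mul_radial_eq_integral_toSphere_mul volume
    (fun x : E => x i * x j * x k * x l) (fun c _ x => by simp; ring)
    (fun s => exp (-π * s ^ 2)), ← prod_gaussMoment_isserlis i j k l,
    ← integral_prod_pow_mul_gaussian]
  simp only [prod_pow_add_singles]

lemma integral_toSphere_sq_dotProduct_mulVec_mul [Nonempty ι] (H : Matrix ι ι ℝ) :
    (∫ y, (((y : E) : ι → ℝ) ⬝ᵥ H *ᵥ ((y : E) : ι → ℝ)) ^ 2 ∂σ)
      * ∫ s : Ioi (0 : ℝ), (s : ℝ) ^ 4 * exp (-π * s ^ 2)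
          ∂(Measure.volumeIoiPow (Module.finrank ℝ E - 1))
      = gaussMoment 2 ^ 2 * ∑ i, ∑ j, ∑ k, ∑ l, H i j * H k l * isserlisTensor i j k l := by
  have integrable_of_continuous (f : sphere (0 : E) 1 → ℝ) (hf : Continuous f) :
      Integrable f σ :=
    hf.integrable_of_hasCompactSupport (.of_compactSpace _)
  simp_rw [sq_dotProduct_mulVec_self]
  simp (disch := intro _ _; exact integrable_of_continuous _ (by fun_prop)) only
    [integral_finsetSum]
  simp only [integral_const_mul, Finset.sum_mul, Finset.mul_sum]
  refine Fintype.sum_congr _ _ fun i => Fintype.sum_congr _ _ fun j =>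
    Fintype.sum_congr _ _ fun k => Fintype.sum_congr _ _ fun l => ?_
  rw [mul_assoc, integral_toSphere_monomial_mul]
  ring

lemma average_toSphere_sq_dotProduct_mulVec {H : Matrix ι ι ℝ} (hH : H.IsSymm) :
    ⨍ y, (((y : E) : ι → ℝ) ⬝ᵥ H *ᵥ ((y : E) : ι → ℝ)) ^ 2 ∂σ
      = (H.trace ^ 2 + 2 * (H * H).trace) / (Fintype.card ι * (Fintype.card ι + 2)) := by
  cases isEmpty_or_nonempty ι
  · simp
  have hQ := integral_toSphere_sq_dotProduct_mulVec_mul H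
  have h1 := integral_toSphere_sq_dotProduct_mulVec_mul (1 : Matrix ι ι ℝ)
  set A := ∫ y, (((y : E) : ι → ℝ) ⬝ᵥ H *ᵥ ((y : E) : ι → ℝ)) ^ 2 ∂σ
  rw [sum_mul_isserlisTensor hH] at hQ
  rw [sum_mul_isserlisTensor Matrix.isSymm_one] at h1
  simp only [Matrix.one_mulVec, dotProduct_self_of_mem_unitSphere, one_pow, integral_const,
    smul_eq_mul, mul_one, Matrix.trace_one] at h1
  have hσ : (σ).real Set.univ ≠ 0 :=
    (ENNReal.toReal_pos (Measure.measure_univ_ne_zero.2 (Measure.toSphere_ne_zero _))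
      (measure_ne_top _ _)).ne'
  have hg : gaussMoment 2 ≠ 0 := by rw [gaussMoment_two]; positivity
  rw [average_eq, smul_eq_mul, inv_mul_eq_div, div_eq_div_iff hσ (by positivity)]
  apply mul_right_cancel₀ (pow_ne_zero 2 hg)
  linear_combination (σ).real Set.univ * hQ - A * h1

end UnitSphere

lemma average_sphereMeasure {d : ℕ} (r : ℝ) {f : EuclideanSpace ℝ (Fin d) → ℝ}
    (hf : Continuous f) :
    ⨍ x, f x ∂(sphereMeasure d r)
      = ⨍ y, f (r • (y : EuclideanSpace ℝ (Fin d)))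
          ∂(volume : Measure (EuclideanSpace ℝ (Fin d))).toSphere := by
  have hφ : Measurable ((r • ·) ∘ Subtype.val : sphere (0 : EuclideanSpace ℝ (Fin d)) 1 → _) :=
    (measurable_const_smul r).comp measurable_subtype_coe
  rw [sphereMeasure, Measure.map_map (measurable_const_smul r) measurable_subtype_coe,
    average_eq, average_eq, measureReal_def, Measure.map_apply hφ .univ, Set.preimage_univ,
    integral_map hφ.aemeasurable hf.aestronglyMeasurable]
  rfl

lemma average_sphereMeasure_sq_dotProduct_mulVec {d : ℕ} (r : ℝ)
    {H : Matrix (Fin d) (Fin d) ℝ} (hH : H.IsSymm) :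
    ⨍ x, ((x : Fin d → ℝ) ⬝ᵥ H *ᵥ (x : Fin d → ℝ)) ^ 2 ∂(sphereMeasure d r)
      = r ^ 4 * ((H.trace ^ 2 + 2 * (H * H).trace) / (d * (d + 2))) := by
  have hunit := average_toSphere_sq_dotProduct_mulVec hH
  rw [Fintype.card_fin] at hunit
  rw [average_sphereMeasure r (by fun_prop), ← hunit]
  simp only [average_eq, WithLp.ofLp_smul, mulVec_smul, dotProduct_smul, smul_dotProduct,
    smul_eq_mul, ← mul_assoc, ← sq, mul_pow, ← pow_mul, integral_const_mul]
  ring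

def quadraticFormPoly {ι R : Type*} [Fintype ι] [CommSemiring R] (H : Matrix ι ι R) :
    MvPolynomial ι R :=
  ∑ i, MvPolynomial.X i * ∑ j, MvPolynomial.C (H i j) * MvPolynomial.X j

section QuadraticFormPoly

variable {ι R : Type*} [Fintype ι] [CommSemiring R] (H : Matrix ι ι R)

lemma eval_quadraticFormPoly (x : ι → R) :
    MvPolynomial.eval x (quadraticFormPoly H) = x ⬝ᵥ H *ᵥ x := by
  simp [quadraticFormPoly, dotProduct, mulVec]

lemma isHomogeneous_quadraticFormPoly : (quadraticFormPoly H).IsHomogeneous 2 :=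
  .sum _ _ _ fun i _ => (MvPolynomial.isHomogeneous_X R i).mul
    (.sum _ _ _ fun j _ => MvPolynomial.isHomogeneous_C_mul_X (H i j) j)

end QuadraticFormPoly

lemma IsSphericalDesign.sum_eval_eq_card_mul_average {d : ℕ} {r : ℝ} {n : ℕ}
    {D : Finset (EuclideanSpace ℝ (Fin d))} (hD : IsSphericalDesign r n D)
    {p : MvPolynomial (Fin d) ℝ} (hp : p.totalDegree ≤ n) :
    ∑ x ∈ D, MvPolynomial.eval (x : Fin d → ℝ) p
      = D.card * ⨍ x, MvPolynomial.eval (x : Fin d → ℝ) p ∂(sphereMeasure d r) := by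
  rcases D.eq_empty_or_nonempty with rfl | hne
  · simp
  rw [hD p hp, mul_div_cancel₀ _ (Nat.cast_ne_zero.2 hne.card_pos.ne')]

theorem four_design_quadratic_identity_general {d : ℕ} (r : ℝ)
    (D : Finset (EuclideanSpace ℝ (Fin d)))
    (hdes : IsSphericalDesign r 4 D) :
    ∀ H : Matrix (Fin d) (Fin d) ℝ, H.IsSymm →
      ∑ x ∈ D, ((x : Fin d → ℝ) ⬝ᵥ H.mulVec (x : Fin d → ℝ)) ^ 2
        = ((r ^ 4 * (D.card : ℝ)) / (d * (d + 2)))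
            * (H.trace ^ 2 + 2 * (H * H).trace) := by
  intro H hH
  have hp : (quadraticFormPoly H ^ 2).totalDegree ≤ 4 :=
    ((isHomogeneous_quadraticFormPoly H).pow 2).totalDegree_le
  have hsum := hdes.sum_eval_eq_card_mul_average hp
  simp only [map_pow, eval_quadraticFormPoly] at hsum
  rw [hsum, average_sphereMeasure_sq_dotProduct_mulVec r hH]
  ring

/-- Let `D` be a finite nonempty subset of the sphere of radius `r` in
`ℝ^d` with `D = −D` which is a spherical 4-design. Then for every symmetric `d×d` real
matrix `H`, `∑_{x ∈ D} (xᵀHx)² = (r⁴ |D| / (d(d+2))) ((Tr H)² + 2 Tr(H²))`. -/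
theorem four_design_quadratic_identity {d : ℕ} (r : ℝ) (hr : 0 < r)
    (D : Finset (EuclideanSpace ℝ (Fin d))) (hDne : D.Nonempty)
    (hDsph : ∀ x ∈ D, ‖x‖ = r) (hsym : ∀ x, x ∈ D ↔ -x ∈ D)
    (hdes : IsSphericalDesign r 4 D) :
    ∀ H : Matrix (Fin d) (Fin d) ℝ, H.IsSymm →
      ∑ x ∈ D, ((x : Fin d → ℝ) ⬝ᵥ H.mulVec (x : Fin d → ℝ)) ^ 2
        = ((r ^ 4 * (D.card : ℝ)) / (d * (d + 2)))
            * (H.trace ^ 2 + 2 * (H * H).trace) :=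
  four_design_quadratic_identity_general r D hdes
end
end

section
/- Let Λ₀ ⊂ ℝ^d be a full-rank lattice all of whose shells are 2-designs, and let f : (0,∞) → ℝ be a differentiable function such that ∑_{0 ≠ w ∈ Λ₀} |f′(‖w‖²)|·‖w‖² < ∞. Then for every symmetric d×d matrix H with Tr H = 0, ∑_{0 ≠ w ∈ Λ₀} f′(‖w‖²)·(wᵀ H w) = 0. -/
open Matrix MeasureTheory
open scoped BigOperators

noncomputable section

/-- A full-rank lattice in `ℝ^d`: the integer span of a basis of `ℝ^d`. -/
def IsFullRankLattice {d : ℕ} (L : Set (Fin d → ℝ)) : Prop :=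
  ∃ b : Module.Basis (Fin d) ℝ (Fin d → ℝ),
    L = {x | ∃ z : Fin d → ℤ, x = ∑ i, (z i : ℝ) • b i}

/-- `Λ` is the `m`-periodic set given by the translates `t i + L` of the full-rank
lattice `L`, the translates being pairwise disjoint. -/
def IsPeriodicRep {d m : ℕ} (L : Set (Fin d → ℝ)) (t : Fin m → Fin d → ℝ)
    (Λ : Set (Fin d → ℝ)) : Prop :=
  IsFullRankLattice L ∧ (∀ i j : Fin m, i ≠ j → t i - t j ∉ L) ∧
    Λ = ⋃ i : Fin m, (fun x => t i + x) '' L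

/-- The shell of squared norm `α` of a set in `ℝ^d`. -/
def lshell {d : ℕ} (Λ : Set (Fin d → ℝ)) (α : ℝ) : Set (Fin d → ℝ) :=
  {w | w ∈ Λ ∧ w ⬝ᵥ w = α}

/-- All nonempty shells `Λ(α)` are spherical 2-designs:
`∑_{w ∈ Λ(α)} w wᵀ = (α |Λ(α)| / d) · I_d`. -/
def ShellsAre2Designs {d : ℕ} (Λ : Set (Fin d → ℝ)) : Prop :=
  ∀ α : ℝ, 0 < α → (lshell Λ α).Nonempty →
    ∑' w : lshell Λ α, Matrix.vecMulVec (w : Fin d → ℝ) (w : Fin d → ℝ)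
      = ((α * (Nat.card (lshell Λ α) : ℝ)) / d) • (1 : Matrix (Fin d) (Fin d) ℝ)

/-- All nonempty shells `Λ(α)` are spherical 4-designs:
`∑_{w ∈ Λ(α)} (wᵀHw)² = (α² |Λ(α)| / (d(d+2))) ((Tr H)² + 2 Tr (H²))` for all symmetric `H`. -/
def ShellsAre4Designs {d : ℕ} (Λ : Set (Fin d → ℝ)) : Prop :=
  ∀ α : ℝ, 0 < α → (lshell Λ α).Nonempty →
    ∀ H : Matrix (Fin d) (Fin d) ℝ, H.IsSymm →
      ∑' w : lshell Λ α, ((w : Fin d → ℝ) ⬝ᵥ H.mulVec (w : Fin d → ℝ)) ^ 2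
        = ((α ^ 2 * (Nat.card (lshell Λ α) : ℝ)) / (d * (d + 2)))
            * (H.trace ^ 2 + 2 * (H * H).trace)

/-! The only input from the design property is that `Tr (H · ∑_{w ∈ Λ(α)} w wᵀ) = 0` for traceless `H`,
i.e. the quadratic form of `H` sums to zero over every finite shell. Summing `f′(‖w‖²) wᵀHw`
shell by shell therefore gives zero; summability of `|f′(‖w‖²)| ‖w‖²` makes the rearrangement
legitimate, and it also forces every shell on which `f′` does not vanish to be finite. -/

section

variable {n : Type*} [Fintype n]

lemma dotProduct_self_pos_of_ne_zero {w : n → ℝ} (hw : w ≠ 0) : 0 < w ⬝ᵥ w :=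
  (Finset.sum_nonneg fun i _ => mul_self_nonneg (w i) : (0 : ℝ) ≤ w ⬝ᵥ w).lt_of_ne
    (Ne.symm (dotProduct_self_eq_zero.not.mpr hw))

lemma sq_le_dotProduct_self (w : n → ℝ) (i : n) : w i ^ 2 ≤ w ⬝ᵥ w := by
  simpa only [dotProduct, sq] using
    Finset.single_le_sum (fun k _ => mul_self_nonneg (w k)) (Finset.mem_univ i)

lemma abs_mul_le_dotProduct_self (w : n → ℝ) (i j : n) : |w i * w j| ≤ w ⬝ᵥ w := by
  rw [abs_mul]
  nlinarith [sq_le_dotProduct_self w i, sq_le_dotProduct_self w j, sq_abs (w i), sq_abs (w j),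
    sq_nonneg (|w i| - |w j|)]

lemma Matrix.abs_dotProduct_mulVec_self_le (H : Matrix n n ℝ) (w : n → ℝ) :
    |w ⬝ᵥ H *ᵥ w| ≤ (∑ i, ∑ j, |H i j|) * (w ⬝ᵥ w) := by
  calc |w ⬝ᵥ H *ᵥ w| = |∑ i, ∑ j, H i j * (w i * w j)| := by
        simp only [dotProduct, mulVec, Finset.mul_sum]
        congr 1
        exact Finset.sum_congr rfl fun i _ => Finset.sum_congr rfl fun j _ => by ring
    _ ≤ ∑ i, ∑ j, |H i j| * |w i * w j| := by
        refine (Finset.abs_sum_le_sum_abs _ _).trans (Finset.sum_le_sum fun i _ => ?_)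
        simpa only [abs_mul] using
          Finset.abs_sum_le_sum_abs (fun j => H i j * (w i * w j)) Finset.univ
    _ ≤ ∑ i, ∑ j, |H i j| * (w ⬝ᵥ w) := by
        gcongr with i _ j _
        exact abs_mul_le_dotProduct_self w i j
    _ = (∑ i, ∑ j, |H i j|) * (w ⬝ᵥ w) := by
        simp only [Finset.sum_mul]

lemma Matrix.trace_mul_vecMulVec_self {R : Type*} [CommSemiring R] (H : Matrix n n R) (w : n → R) :
    (H * vecMulVec w w).trace = w ⬝ᵥ H *ᵥ w := by
  rw [mul_vecMulVec, trace_vecMulVec, dotProduct_comm]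

end

variable {d : ℕ} {Λ : Set (Fin d → ℝ)}

abbrev nonzeroPoints (Λ : Set (Fin d → ℝ)) : Type := {w : Fin d → ℝ // w ∈ Λ ∧ w ≠ 0}

def lshellEquivFiber (Λ : Set (Fin d → ℝ)) {α : ℝ} (hα : α ≠ 0) :
    lshell Λ α ≃
      ((fun w : nonzeroPoints Λ => w.1 ⬝ᵥ w.1) ⁻¹' {α}) where
  toFun w := ⟨⟨w.1, w.2.1, fun h0 => hα (by simpa [h0] using w.2.2.symm)⟩, w.2.2⟩
  invFun w := ⟨w.1.1, w.1.2.1, w.2⟩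
  left_inv _ := rfl
  right_inv _ := rfl

lemma finite_lshell_of_summable {g : ℝ → ℝ} {α : ℝ} (hα : α ≠ 0) (hgα : g α ≠ 0)
    (hsum : Summable fun w : nonzeroPoints Λ => g (w.1 ⬝ᵥ w.1)) :
    Finite (lshell Λ α) := by
  by_contra hinf
  rw [not_finite_iff_infinite] at hinf
  have hconst : Summable fun _ : lshell Λ α => g α := by
    refine ((hsum.subtype _).comp_injective (lshellEquivFiber Λ hα).injective).congr ?_
    intro w
    simp only [Function.comp_apply, lshellEquivFiber, Equiv.coe_fn_mk, w.2.2]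
  exact hgα ((summable_const_iff _).mp hconst)

lemma ShellsAre2Designs.tsum_dotProduct_mulVec_eq_zero (h2 : ShellsAre2Designs Λ) {α : ℝ}
    (hα : 0 < α) [Finite (lshell Λ α)] {H : Matrix (Fin d) (Fin d) ℝ} (htr : H.trace = 0) :
    ∑' w : lshell Λ α, (w : Fin d → ℝ) ⬝ᵥ H *ᵥ (w : Fin d → ℝ) = 0 := by
  rcases (lshell Λ α).eq_empty_or_nonempty with hempty | hne
  · simp [hempty]
  have := Fintype.ofFinite (lshell Λ α)
  have hdesign := congrArg (fun M => (H * M).trace) (h2 α hα hne)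
  simpa only [tsum_fintype, Finset.mul_sum, trace_sum, trace_mul_vecMulVec_self, Matrix.mul_smul,
    Matrix.mul_one, trace_smul, htr, smul_zero] using hdesign

lemma ShellsAre2Designs.tsum_fiber_eq_zero (h2 : ShellsAre2Designs Λ) {g : ℝ → ℝ}
    (hsum : Summable fun w : nonzeroPoints Λ => |g (w.1 ⬝ᵥ w.1)| * (w.1 ⬝ᵥ w.1))
    {H : Matrix (Fin d) (Fin d) ℝ} (htr : H.trace = 0) (α : ℝ) :
    ∑' w : ((fun w : nonzeroPoints Λ => w.1 ⬝ᵥ w.1) ⁻¹' {α}),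
      g (w.1.1 ⬝ᵥ w.1.1) * (w.1.1 ⬝ᵥ H *ᵥ w.1.1) = 0 := by
  rcases le_or_gt α 0 with hα | hα
  · have : IsEmpty ((fun w : nonzeroPoints Λ => w.1 ⬝ᵥ w.1) ⁻¹' {α}) :=
      ⟨fun w => (dotProduct_self_pos_of_ne_zero w.1.2.2).not_ge
        (le_of_eq_of_le (show w.1.1 ⬝ᵥ w.1.1 = α from w.2) hα)⟩
    exact tsum_empty
  by_cases hgα : g α = 0
  · refine (tsum_congr fun w => ?_).trans tsum_zero
    rw [show w.1.1 ⬝ᵥ w.1.1 = α from w.2, hgα, zero_mul]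
  have := finite_lshell_of_summable (g := fun x => |g x| * x) hα.ne'
    (mul_ne_zero (abs_ne_zero.mpr hgα) hα.ne') hsum
  calc ∑' w : ((fun w : nonzeroPoints Λ => w.1 ⬝ᵥ w.1) ⁻¹' {α}),
        g (w.1.1 ⬝ᵥ w.1.1) * (w.1.1 ⬝ᵥ H *ᵥ w.1.1)
      = ∑' w : lshell Λ α, g α * ((w : Fin d → ℝ) ⬝ᵥ H *ᵥ (w : Fin d → ℝ)) := by
        rw [← (lshellEquivFiber Λ hα.ne').tsum_eq]
        exact tsum_congr fun w => congrArg (· * _) (congrArg g w.2.2)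
    _ = 0 := by rw [tsum_mul_left, h2.tsum_dotProduct_mulVec_eq_zero hα htr, mul_zero]

theorem gradient_vanishes_of_shells_two_designs_general {d : ℕ}
    (Λ0 : Set (Fin d → ℝ))
    (h2 : ShellsAre2Designs Λ0)
    (f : ℝ → ℝ)
    (hsum : Summable (fun w : {w : Fin d → ℝ // w ∈ Λ0 ∧ w ≠ 0} =>
      |deriv f (w.1 ⬝ᵥ w.1)| * (w.1 ⬝ᵥ w.1)))
    (H : Matrix (Fin d) (Fin d) ℝ) (htr : H.trace = 0) :
    ∑' w : {w : Fin d → ℝ // w ∈ Λ0 ∧ w ≠ 0},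
      deriv f (w.1 ⬝ᵥ w.1) * (w.1 ⬝ᵥ H.mulVec w.1) = 0 := by
  have hsummable : Summable fun w : nonzeroPoints Λ0 =>
      deriv f (w.1 ⬝ᵥ w.1) * (w.1 ⬝ᵥ H.mulVec w.1) := by
    refine (hsum.mul_left (∑ i, ∑ j, |H i j|)).of_norm_bounded fun w => ?_
    rw [Real.norm_eq_abs, abs_mul, mul_left_comm]
    exact mul_le_mul_of_nonneg_left (abs_dotProduct_mulVec_self_le H w.1) (abs_nonneg _)
  have hfibers := hsummable.hasSum.tsum_fiberwise fun w => w.1 ⬝ᵥ w.1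
  simp only [h2.tsum_fiber_eq_zero hsum htr] at hfibers
  exact hfibers.unique hasSum_zero

/-- If all shells of the full-rank lattice `Λ₀` are 2-designs and `f`
is differentiable on `(0,∞)` with `∑_{0 ≠ w ∈ Λ₀} |f′(‖w‖²)| ‖w‖² < ∞`, then for every
symmetric traceless matrix `H`, `∑_{0 ≠ w ∈ Λ₀} f′(‖w‖²)(wᵀHw) = 0`. -/
theorem gradient_vanishes_of_shells_two_designs {d : ℕ}
    (Λ0 : Set (Fin d → ℝ)) (hΛ : IsFullRankLattice Λ0)
    (h2 : ShellsAre2Designs Λ0)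
    (f : ℝ → ℝ) (hf : ∀ x : ℝ, 0 < x → DifferentiableAt ℝ f x)
    (hsum : Summable (fun w : {w : Fin d → ℝ // w ∈ Λ0 ∧ w ≠ 0} =>
      |deriv f (w.1 ⬝ᵥ w.1)| * (w.1 ⬝ᵥ w.1)))
    (H : Matrix (Fin d) (Fin d) ℝ) (hH : H.IsSymm) (htr : H.trace = 0) :
    ∑' w : {w : Fin d → ℝ // w ∈ Λ0 ∧ w ≠ 0},
      deriv f (w.1 ⬝ᵥ w.1) * (w.1 ⬝ᵥ H.mulVec w.1) = 0 :=
  gradient_vanishes_of_shells_two_designs_general Λ0 h2 f hsum H htr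
end
end

section
/- Let Λ₀ ⊂ ℝ^d be a full-rank lattice all of whose shells are 2-designs, let s > d/2, and let v ∈ ℝ^d. Then ∑_{0 ≠ w ∈ Λ₀} ‖w‖^{−2s−4} ( 2(s+1)(w·v)² − ‖w‖²·‖v‖² ) = (2(s+1)/d − 1)·‖v‖²·∑_{0 ≠ w ∈ Λ₀} ‖w‖^{−2s−2}. -/
/-!
Group the lattice sum by shells. Pairing the 2-design identity of the shell `Λ₀(α)` with `v`
on both sides gives `∑_{w ∈ Λ₀(α)} (w·v)² = α |Λ₀(α)| ‖v‖² / d`, so every shell contributes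
`(2(s+1)/d − 1) ‖v‖² α^{−s−1} |Λ₀(α)|`. The regrouping is legitimate because `∑ ‖w‖^{−2s−2}`
converges over any lattice once `s + 1 > d/2`, and by Cauchy–Schwarz it dominates the series
of the `‖w‖^{−2s−4} (w·v)²`.
-/

open Matrix MeasureTheory
open scoped BigOperators

noncomputable section

section

variable {d : ℕ} {Λ : Set (Fin d → ℝ)}

lemma norm_sq_le_dotProduct_self {ι : Type*} [Fintype ι] (w : ι → ℝ) : ‖w‖ ^ 2 ≤ w ⬝ᵥ w := by
  have hnonneg : 0 ≤ w ⬝ᵥ w := Finset.sum_nonneg fun i _ => mul_self_nonneg (w i)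
  have hnorm : ‖w‖ ≤ √(w ⬝ᵥ w) := (pi_norm_le_iff_of_nonneg (Real.sqrt_nonneg _)).2 fun i =>
    Real.abs_le_sqrt <| by
      simpa [sq, dotProduct] using
        Finset.single_le_sum (fun j _ => mul_self_nonneg (w j)) (Finset.mem_univ i)
  calc ‖w‖ ^ 2 ≤ √(w ⬝ᵥ w) ^ 2 := by gcongr
    _ = w ⬝ᵥ w := Real.sq_sqrt hnonneg

lemma dotProduct_self_pos {ι : Type*} [Fintype ι] {w : ι → ℝ} (hw : w ≠ 0) : 0 < w ⬝ᵥ w :=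
  (pow_pos (norm_pos_iff.2 hw) 2).trans_le (norm_sq_le_dotProduct_self w)

lemma dotProduct_sq_le_dotProduct_self_mul {ι : Type*} [Fintype ι] (u v : ι → ℝ) :
    (u ⬝ᵥ v) ^ 2 ≤ (u ⬝ᵥ u) * (v ⬝ᵥ v) := by
  simpa [dotProduct, sq] using Finset.sum_mul_sq_le_sq_mul_sq Finset.univ u v

lemma dotProduct_vecMulVec_self_mulVec {ι : Type*} [Fintype ι] (u v : ι → ℝ) :
    v ⬝ᵥ vecMulVec u u *ᵥ v = (u ⬝ᵥ v) ^ 2 := by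
  rw [vecMulVec_mulVec, op_smul_eq_smul, dotProduct_smul, smul_eq_mul, dotProduct_comm v u, sq]

lemma IsFullRankLattice.exists_basis_eq_span (hΛ : IsFullRankLattice Λ) :
    ∃ b : Module.Basis (Fin d) ℝ (Fin d → ℝ), Λ = Submodule.span ℤ (Set.range b) := by
  obtain ⟨b, rfl⟩ := hΛ
  refine ⟨b, Set.ext fun x => ?_⟩
  simp [Submodule.mem_span_range_iff_exists_fun, Int.cast_smul_eq_zsmul, eq_comm]

lemma IsFullRankLattice.finite_lshell (hΛ : IsFullRankLattice Λ) (α : ℝ) :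
    (lshell Λ α).Finite := by
  obtain ⟨b, rfl⟩ := hΛ.exists_basis_eq_span
  have hbdd : Bornology.IsBounded {w : Fin d → ℝ | w ⬝ᵥ w = α} :=
    isBounded_iff_forall_norm_le.2 ⟨√α, fun w hw =>
      Real.le_sqrt_of_sq_le ((norm_sq_le_dotProduct_self w).trans_eq hw)⟩
  simpa [lshell, Set.inter_comm, Set.ofPred_and] using ZSpan.setFinite_inter b hbdd

lemma IsFullRankLattice.summable_dotProduct_self_rpow_neg (hΛ : IsFullRankLattice Λ) {t : ℝ}
    (ht : (d : ℝ) / 2 < t) :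
    Summable fun w : nonzeroPoints Λ => (w.1 ⬝ᵥ w.1) ^ (-t) := by
  obtain ⟨b, rfl⟩ := hΛ.exists_basis_eq_span
  set L := Submodule.span ℤ (Set.range b)
  have hrank : (Module.finrank ℤ L : ℝ) ≤ d := by
    exact_mod_cast (finrank_range_le_card (R := ℤ) b).trans_eq (Fintype.card_fin d)
  have ht0 : 0 < t := lt_of_le_of_lt (by positivity) ht
  have hL : Summable fun z : L => ‖z‖ ^ (-(2 * t)) :=
    ZLattice.summable_norm_rpow L _ (by linarith)
  refine (hL.comp_injective (i := fun w => ⟨w.1, w.2.1⟩) fun w w' h => ?_).of_nonneg_of_le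
    (fun w => Real.rpow_nonneg (dotProduct_self_pos w.2.2).le _) fun w => ?_
  · exact Subtype.ext (congrArg (fun z : L => (z : Fin d → ℝ)) h)
  · have hw : 0 < ‖w.1‖ ^ 2 := pow_pos (norm_pos_iff.2 w.2.2) 2
    calc (w.1 ⬝ᵥ w.1) ^ (-t) ≤ (‖w.1‖ ^ 2) ^ (-t) :=
          Real.rpow_le_rpow_of_nonpos hw (norm_sq_le_dotProduct_self w.1) (by linarith)
      _ = ‖w.1‖ ^ (-(2 * t)) := by
          rw [← Real.rpow_natCast, ← Real.rpow_mul (norm_nonneg _)]; norm_num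

-- For an infinite shell, `∑'` and `Nat.card` in `ShellsAre2Designs` are both the junk value `0`.
lemma ShellsAre2Designs.tsum_lshell_dotProduct_sq (h2 : ShellsAre2Designs Λ)
    {α : ℝ} (hα : 0 < α) (hfin : (lshell Λ α).Finite) (v : Fin d → ℝ) :
    ∑' u : lshell Λ α, ((u : Fin d → ℝ) ⬝ᵥ v) ^ 2 =
      α * Nat.card (lshell Λ α) / d * (v ⬝ᵥ v) := by
  have := hfin.fintype
  rcases (lshell Λ α).eq_empty_or_nonempty with hempty | hne
  · have := Set.isEmpty_coe_sort.2 hempty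
    simp
  have key := congrArg (fun M => v ⬝ᵥ M *ᵥ v) (h2 α hα hne)
  simp only [tsum_fintype, sum_mulVec, dotProduct_sum, dotProduct_vecMulVec_self_mulVec,
    smul_mulVec, one_mulVec, dotProduct_smul, smul_eq_mul] at key
  rw [tsum_fintype, key]

def fiberEquivLshell {α : ℝ} (hα : 0 < α) :
    (fun w : nonzeroPoints Λ => w.1 ⬝ᵥ w.1) ⁻¹' {α} ≃ lshell Λ α where
  toFun w := ⟨w.1.1, w.1.2.1, w.2⟩
  invFun u := ⟨⟨u.1, u.2.1, fun h0 => by simpa [h0, hα.ne] using u.2.2⟩, u.2.2⟩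
  left_inv _ := rfl
  right_inv _ := rfl

lemma ShellsAre2Designs.tsum_fiber_dotProduct_sq (h2 : ShellsAre2Designs Λ)
    {α : ℝ} (hfin : (lshell Λ α).Finite) (v : Fin d → ℝ) :
    ∑' w : (fun w : nonzeroPoints Λ => w.1 ⬝ᵥ w.1) ⁻¹' {α}, (w.1.1 ⬝ᵥ v) ^ 2 =
      α * Nat.card ((fun w : nonzeroPoints Λ => w.1 ⬝ᵥ w.1) ⁻¹' {α}) / d * (v ⬝ᵥ v) := by
  rcases le_or_gt α 0 with hα | hα
  · have : IsEmpty ((fun w : nonzeroPoints Λ => w.1 ⬝ᵥ w.1) ⁻¹' {α}) :=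
      ⟨fun w => (dotProduct_self_pos w.1.2.2).not_ge (w.2.trans_le hα)⟩
    simp
  rw [Nat.card_congr (fiberEquivLshell hα), ← h2.tsum_lshell_dotProduct_sq hα hfin v]
  exact (fiberEquivLshell hα).tsum_eq (fun u : lshell Λ α => ((u : Fin d → ℝ) ⬝ᵥ v) ^ 2)

lemma summable_mul_dotProduct_sq {φ : ℝ → ℝ}
    (hφ : Summable fun w : nonzeroPoints Λ => φ (w.1 ⬝ᵥ w.1) * (w.1 ⬝ᵥ w.1))
    (v : Fin d → ℝ) :
    Summable fun w : nonzeroPoints Λ => φ (w.1 ⬝ᵥ w.1) * (w.1 ⬝ᵥ v) ^ 2 := by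
  refine (hφ.norm.mul_right (v ⬝ᵥ v)).of_norm_bounded fun w => ?_
  rw [norm_mul, norm_mul, Real.norm_of_nonneg (sq_nonneg _),
    Real.norm_of_nonneg (dotProduct_self_pos w.2.2).le, mul_assoc]
  gcongr
  exact dotProduct_sq_le_dotProduct_self_mul w.1 v

theorem ShellsAre2Designs.tsum_mul_dotProduct_sq (h2 : ShellsAre2Designs Λ)
    (hfin : ∀ α, (lshell Λ α).Finite) {φ : ℝ → ℝ}
    (hφ : Summable fun w : nonzeroPoints Λ => φ (w.1 ⬝ᵥ w.1) * (w.1 ⬝ᵥ w.1))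
    (v : Fin d → ℝ) :
    ∑' w : nonzeroPoints Λ, φ (w.1 ⬝ᵥ w.1) * (w.1 ⬝ᵥ v) ^ 2 =
      (v ⬝ᵥ v) / d * ∑' w : nonzeroPoints Λ, φ (w.1 ⬝ᵥ w.1) * (w.1 ⬝ᵥ w.1) := by
  set T := fun w : nonzeroPoints Λ => w.1 ⬝ᵥ w.1
  have hfiber (α : ℝ) : ∑' w : T ⁻¹' {α}, φ (T w) * (w.1.1 ⬝ᵥ v) ^ 2 =
      (v ⬝ᵥ v) / d * ∑' w : T ⁻¹' {α}, φ (T w) * T w := by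
    have hT (w : T ⁻¹' {α}) : T w = α := w.2
    simp only [hT, tsum_mul_left, tsum_const, nsmul_eq_mul]
    rw [h2.tsum_fiber_dotProduct_sq (hfin α) v]
    ring
  rw [← ((summable_mul_dotProduct_sq hφ v).hasSum.tsum_fiberwise T).tsum_eq,
    ← (hφ.hasSum.tsum_fiberwise T).tsum_eq, ← tsum_mul_left]
  exact tsum_congr hfiber

end

/-- If all shells of the full-rank lattice `Λ₀` are 2-designs, `s > d/2`
and `v ∈ ℝ^d`, then `∑_{0 ≠ w ∈ Λ₀} ‖w‖^{−2s−4} (2(s+1)(w·v)² − ‖w‖² ‖v‖²)`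
`= (2(s+1)/d − 1) ‖v‖² ∑_{0 ≠ w ∈ Λ₀} ‖w‖^{−2s−2}`. -/
theorem translational_sum_simplification {d : ℕ}
    (Λ0 : Set (Fin d → ℝ)) (hΛ : IsFullRankLattice Λ0)
    (h2 : ShellsAre2Designs Λ0)
    (s : ℝ) (hs : (d : ℝ) / 2 < s) (v : Fin d → ℝ) :
    ∑' w : {w : Fin d → ℝ // w ∈ Λ0 ∧ w ≠ 0},
      (w.1 ⬝ᵥ w.1) ^ (-s - 2) *
        (2 * (s + 1) * (w.1 ⬝ᵥ v) ^ 2 - (w.1 ⬝ᵥ w.1) * (v ⬝ᵥ v))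
      = (2 * (s + 1) / d - 1) * (v ⬝ᵥ v) *
          ∑' w : {w : Fin d → ℝ // w ∈ Λ0 ∧ w ≠ 0}, (w.1 ⬝ᵥ w.1) ^ (-s - 1) := by
  have hshift (w : nonzeroPoints Λ0) :
      (w.1 ⬝ᵥ w.1) ^ (-s - 2) * (w.1 ⬝ᵥ w.1) = (w.1 ⬝ᵥ w.1) ^ (-s - 1) := by
    rw [← Real.rpow_add_one (dotProduct_self_pos w.2.2).ne']; ring_nf
  have hsum : Summable fun w : nonzeroPoints Λ0 =>
      (w.1 ⬝ᵥ w.1) ^ (-s - 2) * (w.1 ⬝ᵥ w.1) := by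
    simpa only [hshift, neg_add'] using
      hΛ.summable_dotProduct_self_rpow_neg (t := s + 1) (by linarith)
  have hdesign := h2.tsum_mul_dotProduct_sq (φ := fun x => x ^ (-s - 2)) hΛ.finite_lshell hsum v
  have hsum_sq := summable_mul_dotProduct_sq (φ := fun x => x ^ (-s - 2)) hsum v
  have hterm (w : nonzeroPoints Λ0) :
      (w.1 ⬝ᵥ w.1) ^ (-s - 2) *
          (2 * (s + 1) * (w.1 ⬝ᵥ v) ^ 2 - (w.1 ⬝ᵥ w.1) * (v ⬝ᵥ v)) =
        2 * (s + 1) * ((w.1 ⬝ᵥ w.1) ^ (-s - 2) * (w.1 ⬝ᵥ v) ^ 2) -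
          (w.1 ⬝ᵥ w.1) ^ (-s - 1) * (v ⬝ᵥ v) := by
    rw [← hshift]; ring
  simp only [hshift] at hdesign hsum
  rw [tsum_congr hterm, (hsum_sq.mul_left _).tsum_sub (hsum.mul_right _), tsum_mul_left,
    tsum_mul_right, hdesign]
  ring
end
end
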